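/- arXiv:math/0204057 — 3 statements merged into one kernel-verified Lean document; each statement's English description precedes it below -/
import Mathlib

section
/- The map sending each Artin generator σ_i of the braid group B_n to the element 1 + q^{1/2} e_i of the Temperley-Lieb algebra TL_n(R) extends to a well-defined monoid homomorphism from B_n to TL_n(R); i.e., the elements 1 + q^{1/2} e_i are invertible and satisfy the braid relations. -/
/-- Relations of the Temperley-Lieb algebra `TL_n(R)` with chosen square root `s` of `q`. -/
inductive TLRel (R : Type) [CommRing R] (s : Rˣ) (n : ℕ) :
    FreeAlgebra R (Fin (n - 1)) → FreeAlgebra R (Fin (n - 1)) → Prop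
  | commute (i j : Fin (n - 1)) (h : (i : ℕ) + 1 < (j : ℕ)) :
      TLRel R s n (FreeAlgebra.ι R i * FreeAlgebra.ι R j)
        (FreeAlgebra.ι R j * FreeAlgebra.ι R i)
  | sandwich (i j : Fin (n - 1)) (h : (i : ℕ) + 1 = (j : ℕ) ∨ (j : ℕ) + 1 = (i : ℕ)) :
      TLRel R s n (FreeAlgebra.ι R i * FreeAlgebra.ι R j * FreeAlgebra.ι R i)
        (FreeAlgebra.ι R i)
  | sq (i : Fin (n - 1)) :
      TLRel R s n (FreeAlgebra.ι R i * FreeAlgebra.ι R i)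
        (algebraMap R (FreeAlgebra R (Fin (n - 1))) (-(s : R) - ((s⁻¹ : Rˣ) : R)) *
          FreeAlgebra.ι R i)

/-- The Temperley-Lieb algebra `TL_n(R)`. -/
abbrev TL (R : Type) [CommRing R] (s : Rˣ) (n : ℕ) := RingQuot (TLRel R s n)

/-- The generator `e_{i+1}` of `TL_n(R)` (indices shifted: `i : Fin (n-1)`). -/
def TLe (R : Type) [CommRing R] (s : Rˣ) (n : ℕ) (i : Fin (n - 1)) : TL R s n :=
  RingQuot.mkAlgHom R (TLRel R s n) (FreeAlgebra.ι R i)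

/-- The braid relations on `m` generators. -/
def braidRels (m : ℕ) : Set (FreeGroup (Fin m)) :=
  { r | (∃ i j : Fin m, (i : ℕ) + 1 < (j : ℕ) ∧
          r = FreeGroup.of i * FreeGroup.of j * (FreeGroup.of i)⁻¹ * (FreeGroup.of j)⁻¹) ∨
        (∃ i j : Fin m, (i : ℕ) + 1 = (j : ℕ) ∧
          r = FreeGroup.of i * FreeGroup.of j * FreeGroup.of i *
              (FreeGroup.of j * FreeGroup.of i * FreeGroup.of j)⁻¹) }

/-- The braid group `B_n`, presented with the Artin generators `σ_1, …, σ_{n-1}`. -/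
abbrev BraidGroup (n : ℕ) := PresentedGroup (braidRels (n - 1))

/-- The Artin generator `σ_{i+1}` of `B_n`. -/
def braidGen (n : ℕ) (i : Fin (n - 1)) : BraidGroup n := PresentedGroup.of i

section Helpers

variable {R A : Type} [CommRing R] [Ring A] [Algebra R A]

lemma inv_helper (a b : R) (x : A) (hab : a * b = 1)
    (hx : x * x = (-a - b) • x) :
    (1 + a • x) * (1 + b • x) = 1 := by
  simp only [mul_add, add_mul, one_mul, mul_one, smul_mul_smul_comm, hx]
  match_scalars <;> first | ring1 | linear_combination (-a - b) * hab

lemma comm_helper (a : R) (x y : A) (hxy : x * y = y * x) :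
    (1 + a • x) * (1 + a • y) = (1 + a • y) * (1 + a • x) := by
  simp only [mul_add, add_mul, one_mul, mul_one, smul_mul_smul_comm, hxy]
  abel

lemma braid_helper (a b : R) (x y : A) (hab : a * b = 1)
    (hx : x * x = (-a - b) • x) (hy : y * y = (-a - b) • y)
    (hxyx : x * y * x = x) (hyxy : y * x * y = y) :
    (1 + a • x) * (1 + a • y) * (1 + a • x) = (1 + a • y) * (1 + a • x) * (1 + a • y) := by
  simp only [mul_add, add_mul, one_mul, mul_one, smul_mul_smul_comm, mul_assoc]
  rw [show x * (y * x) = x from by rw [← mul_assoc, hxyx],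
      show y * (x * y) = y from by rw [← mul_assoc, hyxy], hx, hy]
  match_scalars <;> first | ring1 | linear_combination (-a) * hab | linear_combination a * hab

end Helpers

/-- The assignment `σ_i ↦ 1 + q^{1/2} e_i` extends to a well-defined monoid homomorphism
from the braid group `B_n` to the multiplicative monoid of `TL_n(R)`. -/
theorem braid_to_TL (R : Type) [CommRing R] [IsDomain R] (s : Rˣ) (n : ℕ) :
    ∃ f : BraidGroup n →* TL R s n,
      ∀ i : Fin (n - 1), f (braidGen n i) = 1 + (s : R) • TLe R s n i := by
  set a : R := (s : R) with ha
  set b : R := ((s⁻¹ : Rˣ) : R) with hb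
  have hab : a * b = 1 := by
    rw [ha, hb, ← Units.val_mul, mul_inv_cancel, Units.val_one]
  have hsq : ∀ i : Fin (n - 1),
      TLe R s n i * TLe R s n i = (-a - b) • TLe R s n i := by
    intro i
    have h := RingQuot.mkAlgHom_rel R (TLRel.sq (R := R) (s := s) (n := n) i)
    simpa [TLe, map_mul, Algebra.smul_def] using h
  have hcomm : ∀ i j : Fin (n - 1), (i : ℕ) + 1 < (j : ℕ) →
      TLe R s n i * TLe R s n j = TLe R s n j * TLe R s n i := by
    intro i j h
    have h' := RingQuot.mkAlgHom_rel R (TLRel.commute (R := R) (s := s) (n := n) i j h)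
    simpa [TLe, map_mul] using h'
  have hsand : ∀ i j : Fin (n - 1),
      ((i : ℕ) + 1 = (j : ℕ) ∨ (j : ℕ) + 1 = (i : ℕ)) →
      TLe R s n i * TLe R s n j * TLe R s n i = TLe R s n i := by
    intro i j h
    have h' := RingQuot.mkAlgHom_rel R (TLRel.sandwich (R := R) (s := s) (n := n) i j h)
    simpa [TLe, map_mul] using h'
  -- the units 1 + a • e_i
  let u : Fin (n - 1) → (TL R s n)ˣ := fun i =>
    ⟨1 + a • TLe R s n i, 1 + b • TLe R s n i,
      inv_helper a b _ hab (hsq i),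
      by
        have := inv_helper b a (TLe R s n i) (by rw [mul_comm]; exact hab)
          (by rw [hsq i]; ring_nf)
        simpa using this⟩
  have hrel : ∀ r ∈ braidRels (n - 1), FreeGroup.lift u r = 1 := by
    rintro r (⟨i, j, hij, rfl⟩ | ⟨i, j, hij, rfl⟩)
    · simp only [map_mul, map_inv, FreeGroup.lift_apply_of]
      rw [mul_inv_eq_one]
      have hc : u i * u j = u j * u i :=
        Units.ext (comm_helper a _ _ (hcomm i j hij))
      rw [hc, mul_inv_cancel_right]
    · simp only [map_mul, map_inv, FreeGroup.lift_apply_of]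
      rw [mul_inv_eq_one]
      exact Units.ext (braid_helper a b _ _ hab (hsq i) (hsq j)
        (hsand i j (Or.inl hij)) (hsand j i (Or.inr hij)))
  refine ⟨(Units.coeHom (TL R s n)).comp (PresentedGroup.toGroup hrel), ?_⟩
  intro i
  simp only [MonoidHom.comp_apply, braidGen]
  rw [PresentedGroup.toGroup.of]
  rfl
end

section
/- The Krammer representation matrices satisfy the far commutation braid relation: for |i - k| ≥ 2, the linear maps σ_i and σ_k on the free Λ-module V with basis {F_{j,l} : 1 ≤ j < l ≤ n} commute. -/
open LaurentPolynomial in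
/-- The ring `Λ = ℤ[q^{±1}, t^{±1}]` of Laurent polynomials in two variables. -/
abbrev Lam : Type := LaurentPolynomial (LaurentPolynomial ℤ)

/-- The variable `q` of `Λ`. -/
noncomputable def lamq : Lam := LaurentPolynomial.C (LaurentPolynomial.T 1)

/-- The variable `t` of `Λ`. -/
noncomputable def lamt : Lam := LaurentPolynomial.T 1

/-- The index set `{(j,k) : 1 ≤ j < k ≤ n}` for the basis of the Krammer representation. -/
abbrev KIdx (n : ℕ) := {p : ℕ × ℕ // 1 ≤ p.1 ∧ p.1 < p.2 ∧ p.2 ≤ n}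

/-- The free `Λ`-module `V` with basis `F_{j,k}` for `1 ≤ j < k ≤ n`. -/
abbrev KV (n : ℕ) := KIdx n →₀ Lam

/-- The basis vector `F_{j,k}`. -/
noncomputable def KF (n : ℕ) (j k : ℕ) (h : 1 ≤ j ∧ j < k ∧ k ≤ n) : KV n :=
  Finsupp.single ⟨(j, k), h⟩ 1

/-- The image of the basis vector `F_{j,k}` under Krammer's map `σ_i`. -/
noncomputable def kimg (n : ℕ) (i : ℕ) : KIdx n → KV n
  | ⟨(j, k), hp⟩ =>
    if h1 : i + 1 = j ∧ 1 ≤ i then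
      lamq • KF n i k ⟨h1.2, by omega, by omega⟩
        + (lamq ^ 2 - lamq) • KF n i j ⟨h1.2, by omega, by omega⟩
        + (1 - lamq) • KF n j k hp
    else if h2 : i = j ∧ i + 1 = k then
      (-(lamt * lamq ^ 2)) • KF n j k hp
    else if h3 : i = j then
      KF n (j + 1) k ⟨by omega, by omega, by omega⟩
    else if h4 : i + 1 = k then
      lamq • KF n j i ⟨by omega, by omega, by omega⟩
        + (1 - lamq) • KF n j k hp
        + ((1 - lamq) * (lamq * lamt)) • KF n i k ⟨by omega, by omega, by omega⟩
    else if h5 : i = k ∧ k + 1 ≤ n then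
      KF n j (k + 1) ⟨by omega, by omega, by omega⟩
    else
      KF n j k hp

/-- Krammer's linear map `σ_i` on `V` (for `1 ≤ i ≤ n-1`). -/
noncomputable def krammerσ (n : ℕ) (i : ℕ) : KV n →ₗ[Lam] KV n :=
  Finsupp.lift (KV n) Lam (KIdx n) (kimg n i)

/-! Write `A = {i, i + 1}` and `B = {k, k + 1}`, which are disjoint and not adjacent when
`i + 2 ≤ k`. The map `σ_i` fixes every `F_{j,l}` with `j, l ∉ A`, and sends any `F_{j,l}` into
the span of the `F`'s whose indices lie in `A ∪ {j, l}`. Hence if `{j, l}` misses `B`, then `σ_k`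
fixes both `F_{j,l}` and `σ_i F_{j,l}`, so the two composites agree on `F_{j,l}`; symmetrically if
`{j, l}` misses `A`. The remaining basis vectors have `j ∈ A` and `l ∈ B`, and these four are
computed directly. -/

open Finsupp

lemma krammerσ_single (n i : ℕ) (p : KIdx n) : krammerσ n i (single p 1) = kimg n i p := by
  simp [krammerσ, lift_apply, sum_single_index]

lemma krammerσ_KF (n i j l : ℕ) (h : 1 ≤ j ∧ j < l ∧ l ≤ n) :
    krammerσ n i (KF n j l h) = kimg n i ⟨(j, l), h⟩ :=
  krammerσ_single n i _

def untouchedBy (n i : ℕ) : Set (KIdx n) :=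
  {p | p.1.1 ≠ i ∧ p.1.1 ≠ i + 1 ∧ p.1.2 ≠ i ∧ p.1.2 ≠ i + 1}

lemma mem_untouchedBy {n i j l : ℕ} {h : 1 ≤ j ∧ j < l ∧ l ≤ n} :
    ⟨(j, l), h⟩ ∈ untouchedBy n i ↔ j ≠ i ∧ j ≠ i + 1 ∧ l ≠ i ∧ l ≠ i + 1 :=
  Iff.rfl

section kimg
variable {n i j l : ℕ} {hp : 1 ≤ j ∧ j < l ∧ l ≤ n}

lemma kimg_of_succ_eq_fst (h : i + 1 = j) (hi : 1 ≤ i) :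
    kimg n i ⟨(j, l), hp⟩ = lamq • KF n i l ⟨hi, by omega, by omega⟩
      + (lamq ^ 2 - lamq) • KF n i j ⟨hi, by omega, by omega⟩
      + (1 - lamq) • KF n j l hp := by
  rw [kimg, dif_pos ⟨h, hi⟩]

lemma kimg_of_eq_fst (h : i = j) (hl : i + 1 ≠ l) :
    kimg n i ⟨(j, l), hp⟩ = KF n (j + 1) l ⟨by omega, by omega, by omega⟩ := by
  rw [kimg, dif_neg (by omega), dif_neg (by omega), dif_pos h]

lemma kimg_of_succ_eq_snd (h : i + 1 = l) (hj : i ≠ j) :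
    kimg n i ⟨(j, l), hp⟩ = lamq • KF n j i ⟨by omega, by omega, by omega⟩
      + (1 - lamq) • KF n j l hp
      + ((1 - lamq) * (lamq * lamt)) • KF n i l ⟨by omega, by omega, by omega⟩ := by
  rw [kimg, dif_neg (by omega), dif_neg (by omega), dif_neg hj, dif_pos h]

lemma kimg_of_eq_snd (h : i = l) (hl : l + 1 ≤ n) :
    kimg n i ⟨(j, l), hp⟩ = KF n j (l + 1) ⟨by omega, by omega, by omega⟩ := by
  rw [kimg, dif_neg (by omega), dif_neg (by omega), dif_neg (by omega), dif_neg (by omega),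
    dif_pos ⟨h, hl⟩]

lemma kimg_of_mem_untouchedBy (h : ⟨(j, l), hp⟩ ∈ untouchedBy n i) :
    kimg n i ⟨(j, l), hp⟩ = KF n j l hp := by
  rw [mem_untouchedBy] at h
  rw [kimg, dif_neg (by omega), dif_neg (by omega), dif_neg (by omega), dif_neg (by omega),
    dif_neg (by omega)]

end kimg

lemma krammerσ_eq_self_of_mem_supported {n i : ℕ} {v : KV n}
    (hv : v ∈ supported Lam Lam (untouchedBy n i)) : krammerσ n i v = v := by
  rw [supported_eq_span_single] at hv
  refine LinearMap.eqOn_span (g := LinearMap.id) ?_ hv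
  rintro _ ⟨⟨⟨j, l⟩, hp⟩, h, rfl⟩
  exact (krammerσ_KF n i j l hp).trans (kimg_of_mem_untouchedBy h)

lemma kimg_mem_supported_untouchedBy {n i k : ℕ} (hik : i + 2 ≤ k ∨ k + 2 ≤ i) {p : KIdx n}
    (hp : p ∈ untouchedBy n k) : kimg n i p ∈ supported Lam Lam (untouchedBy n k) := by
  obtain ⟨⟨j, l⟩, hjl⟩ := p
  rw [mem_untouchedBy] at hp
  simp only [kimg, KF]
  split_ifs <;> apply_rules [add_mem, Submodule.smul_mem, single_mem_supported] <;>
    (rw [mem_untouchedBy]; omega)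

lemma krammerσ_kimg_comm_of_mem_untouchedBy {n i k : ℕ} (hik : i + 2 ≤ k ∨ k + 2 ≤ i)
    {p : KIdx n} (hp : p ∈ untouchedBy n k) :
    krammerσ n i (kimg n k p) = krammerσ n k (kimg n i p) := by
  obtain ⟨⟨j, l⟩, hjl⟩ := p
  rw [kimg_of_mem_untouchedBy hp, krammerσ_KF,
    krammerσ_eq_self_of_mem_supported (kimg_mem_supported_untouchedBy hik hp)]

lemma krammerσ_kimg_comm_of_cross {n i k j l : ℕ} (hi : 1 ≤ i) (hkn : k < n) (hik : i + 2 ≤ k)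
    (hj : j = i ∨ j = i + 1) (hl : l = k ∨ l = k + 1) (hp : 1 ≤ j ∧ j < l ∧ l ≤ n) :
    krammerσ n i (kimg n k ⟨(j, l), hp⟩) = krammerσ n k (kimg n i ⟨(j, l), hp⟩) := by
  rcases hj with rfl | rfl <;> rcases hl with rfl | rfl
  all_goals
    simp (disch := (try rw [mem_untouchedBy]); omega) only [map_add, map_smul, krammerσ_KF,
      kimg_of_succ_eq_fst, kimg_of_eq_fst, kimg_of_succ_eq_snd, kimg_of_eq_snd,
      kimg_of_mem_untouchedBy]
  -- only `(j, l) = (i + 1, k + 1)`, where both maps act nontrivially, needs coefficient algebra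
  module

lemma krammerσ_comm_of_add_two_le {n i k : ℕ} (hi : 1 ≤ i) (hkn : k < n) (hik : i + 2 ≤ k) :
    (krammerσ n i).comp (krammerσ n k) = (krammerσ n k).comp (krammerσ n i) := by
  refine (Finsupp.basisSingleOne (R := Lam)).ext fun p => ?_
  simp only [coe_basisSingleOne, LinearMap.comp_apply, krammerσ_single]
  by_cases hpk : p ∈ untouchedBy n k
  · exact krammerσ_kimg_comm_of_mem_untouchedBy (.inl hik) hpk
  by_cases hpi : p ∈ untouchedBy n i
  · exact (krammerσ_kimg_comm_of_mem_untouchedBy (.inr hik) hpi).symm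
  obtain ⟨⟨j, l⟩, hp⟩ := p
  rw [mem_untouchedBy] at hpk hpi
  exact krammerσ_kimg_comm_of_cross hi hkn hik (by omega) (by omega) hp

/-- The Krammer representation maps satisfy far commutation: for `|i - k| ≥ 2`,
the maps `σ_i` and `σ_k` commute. -/
theorem krammer_far_commutation (n i k : ℕ) (hi1 : 1 ≤ i) (hin : i < n)
    (hk1 : 1 ≤ k) (hkn : k < n) (hik : i + 2 ≤ k ∨ k + 2 ≤ i) :
    (krammerσ n i).comp (krammerσ n k) = (krammerσ n k).comp (krammerσ n i) := by
  rcases hik with h | h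
  · exact krammerσ_comm_of_add_two_le hi1 hkn h
  · exact (krammerσ_comm_of_add_two_le hk1 hin h).symm
end

section
/- The Krammer representation matrices satisfy the braid relation σ_i σ_{i+1} σ_i = σ_{i+1} σ_i σ_{i+1} as linear maps on the free Λ-module V with basis {F_{j,k} : 1 ≤ j < k ≤ n}. -/
section Generic
variable {R : Type*} [CommRing R]

/-- Generic version of `KF` over an arbitrary commutative ring. -/
noncomputable def gKF (R : Type*) [CommRing R] (n : ℕ) (j k : ℕ)
    (h : 1 ≤ j ∧ j < k ∧ k ≤ n) : KIdx n →₀ R :=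
  Finsupp.single ⟨(j, k), h⟩ 1

/-- Generic version of `kimg` over an arbitrary commutative ring. -/
noncomputable def gkimg (q t : R) (n : ℕ) (i : ℕ) : KIdx n → (KIdx n →₀ R)
  | ⟨(j, k), hp⟩ =>
    if h1 : i + 1 = j ∧ 1 ≤ i then
      q • gKF R n i k ⟨h1.2, by omega, by omega⟩
        + (q ^ 2 - q) • gKF R n i j ⟨h1.2, by omega, by omega⟩
        + (1 - q) • gKF R n j k hp
    else if h2 : i = j ∧ i + 1 = k then
      (-(t * q ^ 2)) • gKF R n j k hp
    else if h3 : i = j then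
      gKF R n (j + 1) k ⟨by omega, by omega, by omega⟩
    else if h4 : i + 1 = k then
      q • gKF R n j i ⟨by omega, by omega, by omega⟩
        + (1 - q) • gKF R n j k hp
        + ((1 - q) * (q * t)) • gKF R n i k ⟨by omega, by omega, by omega⟩
    else if h5 : i = k ∧ k + 1 ≤ n then
      gKF R n j (k + 1) ⟨by omega, by omega, by omega⟩
    else
      gKF R n j k hp

/-- Generic version of `krammerσ` over an arbitrary commutative ring. -/
noncomputable def gσ (q t : R) (n : ℕ) (i : ℕ) : (KIdx n →₀ R) →ₗ[R] (KIdx n →₀ R) :=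
  Finsupp.lift (KIdx n →₀ R) R (KIdx n) (gkimg q t n i)

lemma gsig_KF (q t : R) (n i j k : ℕ) (h : 1 ≤ j ∧ j < k ∧ k ≤ n) :
    gσ q t n i (gKF R n j k h) = gkimg q t n i ⟨(j, k), h⟩ := by
  simp [gσ, gKF]

set_option maxHeartbeats 4000000 in
lemma gbraid_single (q t : R) (n i : ℕ) (hi1 : 1 ≤ i) (hin : i + 1 < n) (j k : ℕ)
    (h : 1 ≤ j ∧ j < k ∧ k ≤ n) :
    gσ q t n i (gσ q t n (i+1) (gσ q t n i (gKF R n j k h))) =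
      gσ q t n (i+1) (gσ q t n i (gσ q t n (i+1) (gKF R n j k h))) := by
  obtain ⟨h1, h2, h3⟩ := h
  rw [gsig_KF, gsig_KF]
  simp only [gkimg]
  split_ifs <;> try omega
  all_goals (generalize_proofs; try (casesm* _ ∧ _); subst_vars)
  all_goals (simp (disch := omega) only [map_add, map_smul, gsig_KF, gkimg,
    smul_add, smul_smul, dif_pos, dif_neg, true_and, and_true, false_and, and_false,
    dite_true, dite_false, not_true, not_false_iff])
  all_goals module

lemma gbraid (q t : R) (n i : ℕ) (hi1 : 1 ≤ i) (hin : i + 1 < n) :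
    (gσ q t n i).comp ((gσ q t n (i + 1)).comp (gσ q t n i)) =
      (gσ q t n (i + 1)).comp ((gσ q t n i).comp (gσ q t n (i + 1))) := by
  apply Finsupp.lhom_ext
  rintro ⟨⟨j, k⟩, hp⟩ b
  have hb : (Finsupp.single (⟨(j, k), hp⟩ : KIdx n) b) = b • gKF R n j k hp := by
    rw [gKF, Finsupp.smul_single, smul_eq_mul, mul_one]
  rw [hb]
  simp only [LinearMap.comp_apply, map_smul]
  rw [gbraid_single q t n i hi1 hin j k hp]

end Generic

lemma kimg_eq_gkimg (n i : ℕ) : kimg n i = gkimg lamq lamt n i := by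
  funext p
  rcases p with ⟨⟨j, k⟩, hp⟩
  rfl

lemma krammerσ_eq_gσ (n i : ℕ) : krammerσ n i = gσ lamq lamt n i := by
  rw [krammerσ, gσ, kimg_eq_gkimg]

/-- The Krammer representation maps satisfy the braid relation
`σ_i σ_{i+1} σ_i = σ_{i+1} σ_i σ_{i+1}`. -/
theorem krammer_braid_relation (n i : ℕ) (hi1 : 1 ≤ i) (hin : i + 1 < n) :
    (krammerσ n i).comp ((krammerσ n (i + 1)).comp (krammerσ n i)) =
      (krammerσ n (i + 1)).comp ((krammerσ n i).comp (krammerσ n (i + 1))) := by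
  simp only [krammerσ_eq_gσ]
  exact gbraid lamq lamt n i hi1 hin
end
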